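/- Let p be a prime with p ≡ 7 (mod 8). The bordered quadratic double circulant code B_p(1+u+uω, ω+uω, 1+ω, u, 1+uω, 1+uω) over F₄+uF₄, i.e. the row span of the (p+1)×(2p+2) matrix [ I_{p+1} | M ] where M has top-left entry u, top row continuing with p entries equal to 1+uω, left column continuing with p entries equal to 1+uω, and lower-right p×p block Q_p(1+u+uω, ω+uω, 1+ω), is a self-dual code of length 2p+2 over F₄+uF₄. -/

import Mathlib

noncomputable section

open Matrix
open scoped Classical

/-- The quadratic residue circulant matrix `Q_p(a,b,c)`: the `p × p` circulant matrix
(indexed by `ZMod p`) whose `(i,j)` entry is `a` if `j - i = 0`, `b` if `j - i` is a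
nonzero quadratic residue modulo `p`, and `c` if `j - i` is a quadratic non-residue. -/
def Qcirc {R : Type*} [CommRing R] (p : ℕ) (a b c : R) :
    Matrix (ZMod p) (ZMod p) R :=
  Matrix.of fun i j =>
    if j - i = 0 then a else if IsSquare (j - i) then b else c

/-- The bordered matrix `M` of size `(p+1) × (p+1)` (rows and columns indexed by
`Option (ZMod p)`, with `none` the border index): `M[none,none] = lam`,
`M[none, some j] = beta`, `M[some i, none] = gam`, and the lower-right `p × p`
block is `Q_p(a,b,c)`. -/
def borderedQ {R : Type*} [CommRing R] (p : ℕ) (a b c lam beta gam : R) :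
    Option (ZMod p) → Option (ZMod p) → R := fun i j =>
  match i, j with
  | none, none => lam
  | none, some _ => beta
  | some _, none => gam
  | some i', some j' => Qcirc p a b c i' j'

/-- The rows of the generator matrix `[ I_{p+1} | M ]` of the bordered quadratic
double circulant code, as vectors of length `2p + 2`. -/
def borderedQDCGen {R : Type*} [CommRing R] (p : ℕ) (a b c lam beta gam : R) :
    Option (ZMod p) → (Option (ZMod p) ⊕ Option (ZMod p)) → R := fun i =>
  Sum.elim (fun j => if i = j then 1 else 0) (fun j => borderedQ p a b c lam beta gam i j)

/-- The bordered quadratic double circulant code `B_p(a,b,c,λ,β,γ)`: the row span of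
`[ I_{p+1} | M ]`, a linear code of length `2p + 2` over `R`. -/
def borderedQDC {R : Type*} [CommRing R] (p : ℕ) (a b c lam beta gam : R) :
    Submodule R ((Option (ZMod p) ⊕ Option (ZMod p)) → R) :=
  Submodule.span R (Set.range (borderedQDCGen p a b c lam beta gam))

/-- The dual of a code `C ⊆ Rⁿ` with respect to the Euclidean inner product. -/
def dualSet {R ι : Type*} [CommRing R] [Fintype ι] (C : Set (ι → R)) : Set (ι → R) :=
  {x | ∀ y ∈ C, ∑ i, x i * y i = 0}

/-- The field `F₄` with four elements. -/
abbrev F4 := GaloisField 2 2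

/-- The ring `F₄ + u F₄ = F₄[u]/(u²)`. -/
abbrev R4 := DualNumber F4

/-!
A vector `(x, y)` lies in the row span of `[I | M]` iff `y = x M`, and is orthogonal to that span
iff `x + M y = 0`; when `M Mᵀ = -I` the two conditions are equivalent, so the code is self-dual.

Over a ring of characteristic `2`, the Gram matrix `Q Qᵀ` of `Q = Q_p(a,b,c)` only sees the
parities of two counts: the `(p - 1) / 2` nonzero squares, and, for `d ≠ 0` and `p ≡ 3 (mod 4)`,
the `(p - 3) / 4` elements `t` with `t` and `t + d` both nonzero squares (this count comes from
the Jacobi sum `J(χ, χ) = -χ(-1)` of the quadratic character). Both are odd exactly when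
`p ≡ 7 (mod 8)`, and then `Q Qᵀ` has diagonal `a² + b² + c²` and off-diagonal entries
`ab + bc + ca + b² + c²`. For the given entries over `F₄ + uF₄` this makes the bordered matrix
satisfy `M Mᵀ = I = -I`.
-/

section SelfDualCode
open Submodule Set

variable {R m n : Type*} [CommRing R] [Fintype n]

theorem dualSet_span_range_row [Fintype m] (G : Matrix m n R) :
    dualSet (span R (range G.row) : Set (n → R)) = {x | G *ᵥ x = 0} := by
  ext x
  simp only [dualSet, ← range_vecMulLinear, SetLike.mem_coe, LinearMap.mem_range,
    forall_exists_index, forall_apply_eq_imp_iff, vecMulLinear_apply, Set.mem_ofPred_eq]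
  rw [← dotProduct_eq_zero_iff]
  refine forall_congr' fun v => ?_
  change x ⬝ᵥ (v ᵥ* G) = 0 ↔ _
  rw [dotProduct_comm, ← dotProduct_mulVec, dotProduct_comm]

theorem mem_span_range_row_fromCols_one [DecidableEq n] (M : Matrix n n R) (x : n ⊕ n → R) :
    x ∈ span R (range (fromCols 1 M).row) ↔ x ∘ Sum.inr = x ∘ Sum.inl ᵥ* M := by
  rw [← range_vecMulLinear, LinearMap.mem_range]
  simp only [vecMulLinear_apply, vecMul_fromCols, vecMul_one]
  constructor
  · rintro ⟨v, rfl⟩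
    rfl
  · intro h
    refine ⟨x ∘ Sum.inl, ?_⟩
    rw [← h]
    ext (i | i) <;> rfl

theorem span_range_row_fromCols_one_eq_dualSet [DecidableEq n] {M : Matrix n n R}
    (hM : M * Mᵀ = -1) :
    (span R (range (fromCols (1 : Matrix n n R) M).row) : Set (n ⊕ n → R)) =
      dualSet (span R (range (fromCols (1 : Matrix n n R) M).row) : Set (n ⊕ n → R)) := by
  have hM' : Mᵀ * M = -1 := by
    have : Mᵀ * -M = 1 := mul_eq_one_comm.mp (by rw [neg_mul, hM, neg_neg])
    rw [← neg_neg (Mᵀ * M), ← mul_neg, this]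
  rw [dualSet_span_range_row]
  ext x
  simp only [SetLike.mem_coe, mem_span_range_row_fromCols_one, Set.mem_ofPred_eq, fromCols_mulVec,
    one_mulVec]
  constructor
  · intro h
    rw [h, ← mulVec_transpose, mulVec_mulVec, hM, neg_mulVec, one_mulVec, add_neg_cancel]
  · intro h
    rw [eq_neg_of_add_eq_zero_left h, ← mulVec_transpose, mulVec_neg, mulVec_mulVec, hM',
      neg_mulVec, one_mulVec, neg_neg]

end SelfDualCode

section QuadraticChar
open Finset

variable {F : Type*} [Field F] [Fintype F] [DecidableEq F]

local notation "χ" => quadraticChar F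

theorem sum_quadraticChar_mul_quadraticChar_add (hF : ringChar F ≠ 2) {d : F} (hd : d ≠ 0) :
    ∑ t, χ t * χ (t + d) = -1 := by
  have hneg1 : χ (-1) ^ 2 = 1 := quadraticChar_sq_one (neg_ne_zero.mpr one_ne_zero)
  have hterm : ∀ x, χ (-d * x) * χ (-d * x + d) = χ (-1) * (χ x * χ (1 - x)) := fun x => by
    rw [show -d * x + d = d * (1 - x) by ring, show -d * x = -1 * x * d by ring]
    simp only [map_mul]
    linear_combination χ (-1) * χ x * χ (1 - x) * quadraticChar_sq_one hd
  have hjacobi : ∑ x, χ x * χ (1 - x) = -χ (-1) := by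
    simpa [jacobiSum, (quadraticChar_isQuadratic F).inv] using
      jacobiSum_nontrivial_inv (quadraticChar_ne_one hF)
  rw [← Equiv.sum_comp (Equiv.mulLeft₀ (-d) (neg_ne_zero.mpr hd))]
  simp only [Equiv.mulLeft₀_apply, hterm, ← mul_sum, hjacobi]
  linear_combination -hneg1

theorem two_mul_card_quadraticChar_eq_one_add_one (hF : ringChar F ≠ 2) :
    2 * #{t | χ t = 1} + 1 = Fintype.card F := by
  have hpt : ∀ t : F, 1 + χ t = (if χ t = 1 then 2 else 0) + if t = 0 then 1 else 0 := by
    intro t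
    by_cases ht : t = 0
    · simp [ht]
    · rcases quadraticChar_dichotomy ht with h | h <;> simp [h, ht]
  have hsum := sum_congr rfl fun t (_ : t ∈ univ) => hpt t
  rw [sum_add_distrib, quadraticChar_sum_zero hF, sum_add_distrib,
    ← sum_filter, sum_ite_eq'] at hsum
  simp only [sum_const, card_univ, nsmul_eq_mul, mem_univ, if_true] at hsum
  exact_mod_cast (by linarith : (2 * #{t | χ t = 1} + 1 : ℤ) = Fintype.card F)

theorem quadraticChar_neg_of_card_mod_four_eq_three (hF : Fintype.card F % 4 = 3) (a : F) :
    χ (-a) = -χ a := by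
  have : χ (-1) = -1 := quadraticChar_neg_one_iff_not_isSquare.mpr
    (FiniteField.isSquare_neg_one_iff.not.mpr (not_not.mpr hF))
  rw [neg_eq_neg_one_mul, map_mul, this, neg_one_mul]

theorem four_mul_card_quadraticChar_shift_eq_one_add_three (hF : Fintype.card F % 4 = 3)
    {d : F} (hd : d ≠ 0) :
    4 * #{t | χ t = 1 ∧ χ (t + d) = 1} + 3 = Fintype.card F := by
  have hF2 : ringChar F ≠ 2 := fun h => by
    have := FiniteField.even_card_of_char_two h
    omega
  have hpt : ∀ t, (1 + χ t) * (1 + χ (t + d)) =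
      4 * (if χ t = 1 ∧ χ (t + d) = 1 then 1 else 0) + (if t = 0 then 1 + χ d else 0) +
        if t = -d then 1 + χ (-d) else 0 := by
    intro t
    by_cases ht : t = 0
    · simp [ht, hd, eq_comm (a := (0 : F)), neg_eq_zero]
    by_cases htd : t = -d
    · simp [htd, hd]
    have htd' : t + d ≠ 0 := fun h => htd (eq_neg_of_add_eq_zero_left h)
    rcases quadraticChar_dichotomy ht with h | h <;>
      rcases quadraticChar_dichotomy htd' with h' | h' <;> simp [h, h', ht, htd]
  have hshift : ∑ t, χ (t + d) = 0 :=
    (Equiv.sum_comp (Equiv.addRight d) χ).trans (quadraticChar_sum_zero hF2)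
  have hsum := sum_congr rfl fun t (_ : t ∈ univ) => hpt t
  simp only [add_mul, mul_add, one_mul, mul_one, sum_add_distrib, ← mul_sum,
    quadraticChar_sum_zero hF2, hshift, sum_quadraticChar_mul_quadraticChar_add hF2 hd,
    sum_boole, sum_ite_eq', mem_univ, if_true, sum_const,
    card_univ, nsmul_eq_mul, mul_one,
    quadraticChar_neg_of_card_mod_four_eq_three hF] at hsum
  exact_mod_cast (by linarith : (4 * #{t | χ t = 1 ∧ χ (t + d) = 1} + 3 : ℤ) = Fintype.card F)

end QuadraticChar

section QuadraticResidueCirculant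

open Finset

variable {R : Type*} [CommRing R] {p : ℕ} [Fact p.Prime]

def qcircRow (p : ℕ) (a b c : R) (t : ZMod p) : R :=
  if t = 0 then a else if IsSquare t then b else c

theorem Qcirc_apply (a b c : R) (i j : ZMod p) : Qcirc p a b c i j = qcircRow p a b c (j - i) :=
  rfl

variable (R) in
def quadResIndicator (t : ZMod p) : R :=
  if quadraticChar (ZMod p) t = 1 then 1 else 0

theorem qcircRow_eq (a b c : R) (t : ZMod p) :
    qcircRow p a b c t =
      c + (a - c) * (if t = 0 then 1 else 0) + (b - c) * quadResIndicator R t := by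
  by_cases ht : t = 0
  · simp [qcircRow, quadResIndicator, ht]
  have hsq := quadraticChar_one_iff_isSquare ht
  rw [qcircRow, quadResIndicator, if_neg ht, if_neg ht]
  by_cases h : IsSquare t
  · rw [if_pos h, if_pos (hsq.mpr h)]
    ring
  · rw [if_neg h, if_neg (mt hsq.mp h)]
    ring

theorem quadResIndicator_add_neg (hp : p % 4 = 3) {d : ZMod p} (hd : d ≠ 0) :
    quadResIndicator R d + quadResIndicator R (-d) = 1 := by
  rw [quadResIndicator, quadResIndicator,
    quadraticChar_neg_of_card_mod_four_eq_three (by rwa [ZMod.card])]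
  rcases quadraticChar_dichotomy hd with h | h <;> simp [h]

theorem sum_quadResIndicator (h2 : (2 : R) = 0) (hp : p % 4 = 3) :
    ∑ t : ZMod p, quadResIndicator R t = 1 := by
  have hcard := two_mul_card_quadraticChar_eq_one_add_one (F := ZMod p)
    (by rw [ZMod.ringChar_zmod_n]; omega)
  rw [ZMod.card] at hcard
  simp only [quadResIndicator, sum_boole]
  exact natCast_eq_one_of_odd_of_two_eq_zero (by rw [Nat.odd_iff]; omega) h2

theorem sum_quadResIndicator_mul_add (h2 : (2 : R) = 0) (hp : p % 8 = 7) (d : ZMod p) :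
    ∑ t, quadResIndicator R t * quadResIndicator R (t + d) = 1 := by
  by_cases hd : d = 0
  · simp only [hd, add_zero, quadResIndicator, ite_zero_mul_ite_zero, and_self, mul_one]
    exact sum_quadResIndicator h2 (by omega)
  have hcard := four_mul_card_quadraticChar_shift_eq_one_add_three (F := ZMod p)
    (by rw [ZMod.card]; omega) hd
  rw [ZMod.card] at hcard
  simp only [quadResIndicator, ite_zero_mul_ite_zero, mul_one, sum_boole]
  exact natCast_eq_one_of_odd_of_two_eq_zero (by rw [Nat.odd_iff]; omega) h2

theorem sum_qcircRow (h2 : (2 : R) = 0) (hp : p % 4 = 3) (a b c : R) :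
    ∑ t, qcircRow p a b c t = a + b + c := by
  have hp1 : ((p : ℕ) : R) = 1 :=
    natCast_eq_one_of_odd_of_two_eq_zero (by rw [Nat.odd_iff]; omega) h2
  simp only [qcircRow_eq, sum_add_distrib, ← mul_sum, sum_quadResIndicator h2 hp, sum_ite_eq',
    mem_univ, if_true, sum_const, card_univ, ZMod.card, nsmul_eq_mul, hp1]
  linear_combination (-c) * h2

theorem sum_qcircRow_mul_add (h2 : (2 : R) = 0) (hp : p % 8 = 7) (a b c : R) (d : ZMod p) :
    ∑ t, qcircRow p a b c t * qcircRow p a b c (t + d) =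
      if d = 0 then a ^ 2 + b ^ 2 + c ^ 2 else a * b + b * c + c * a + b ^ 2 + c ^ 2 := by
  have hp4 : p % 4 = 3 := by omega
  have hsplit : ∀ t, qcircRow p a b c t * qcircRow p a b c (t + d) =
      c * qcircRow p a b c (t + d) +
        (a - c) * (if t = 0 then qcircRow p a b c d else 0) +
        (b - c) * (quadResIndicator R t * qcircRow p a b c (t + d)) := by
    intro t
    rw [qcircRow_eq a b c t]
    split_ifs with h
    · rw [h, zero_add]
      ring
    · ring
  have hshift : ∑ t, qcircRow p a b c (t + d) = a + b + c :=
    (Equiv.sum_comp (Equiv.addRight d) _).trans (sum_qcircRow h2 hp4 a b c)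
  have hsquares : ∑ t, quadResIndicator R t * qcircRow p a b c (t + d) =
      c + (a - c) * quadResIndicator R (-d) + (b - c) := by
    have hpt : ∀ t, quadResIndicator R t * qcircRow p a b c (t + d) =
        c * quadResIndicator R t + (a - c) * (if t = -d then quadResIndicator R (-d) else 0) +
          (b - c) * (quadResIndicator R t * quadResIndicator R (t + d)) := by
      intro t
      rw [qcircRow_eq a b c (t + d)]
      by_cases h : t = -d
      · rw [if_pos h, if_pos (by rw [h, neg_add_cancel]), h]
        ring
      · rw [if_neg h, if_neg fun h' => h (eq_neg_of_add_eq_zero_left h')]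
        ring
    simp only [hpt, sum_add_distrib, ← mul_sum, sum_quadResIndicator h2 hp4,
      sum_quadResIndicator_mul_add h2 hp, sum_ite_eq', mem_univ, if_true]
    ring
  simp only [hsplit, sum_add_distrib, ← mul_sum, hshift, hsquares, sum_ite_eq', mem_univ, if_true]
  split_ifs with hd
  · rw [hd, neg_zero, qcircRow, quadResIndicator, if_pos rfl, quadraticChar_zero,
      if_neg zero_ne_one]
    ring
  · -- the terms involving whether `d` is a square cancel by `quadResIndicator_add_neg`
    rw [qcircRow_eq a b c d, if_neg hd]
    linear_combination (b - c) * (a - c) * quadResIndicator_add_neg (R := R) hp4 hd -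
      b * c * h2

theorem sum_Qcirc_apply (h2 : (2 : R) = 0) (hp : p % 4 = 3) (a b c : R) (i : ZMod p) :
    ∑ j, Qcirc p a b c i j = a + b + c :=
  (Equiv.sum_comp (Equiv.subRight i) _).trans (sum_qcircRow h2 hp a b c)

theorem Qcirc_mul_transpose_apply (h2 : (2 : R) = 0) (hp : p % 8 = 7) (a b c : R) (i j : ZMod p) :
    (Qcirc p a b c * (Qcirc p a b c)ᵀ) i j =
      if i = j then a ^ 2 + b ^ 2 + c ^ 2 else a * b + b * c + c * a + b ^ 2 + c ^ 2 := by
  have h := sum_qcircRow_mul_add h2 hp a b c (i - j)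
  simp only [sub_eq_zero] at h
  rw [← h, mul_apply, ← Equiv.sum_comp (Equiv.addRight i)]
  refine sum_congr rfl fun t _ => ?_
  simp only [transpose_apply, Qcirc_apply, Equiv.coe_addRight]
  congr 2 <;> abel

end QuadraticResidueCirculant

section BorderedCirculant

variable {R : Type*} [CommRing R] {p : ℕ} [Fact p.Prime]

theorem borderedQ_mul_transpose_eq_one (h2 : (2 : R) = 0) (hp : p % 8 = 7)
    {a b c lam beta gam : R} (h_corner : lam ^ 2 + beta ^ 2 = 1)
    (h_border : lam * gam + beta * (a + b + c) = 0)
    (h_diag : gam ^ 2 + (a ^ 2 + b ^ 2 + c ^ 2) = 1)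
    (h_offdiag : gam ^ 2 + (a * b + b * c + c * a + b ^ 2 + c ^ 2) = 0) :
    of (borderedQ p a b c lam beta gam) * (of (borderedQ p a b c lam beta gam))ᵀ = 1 := by
  have hp1 : ((p : ℕ) : R) = 1 :=
    natCast_eq_one_of_odd_of_two_eq_zero (by rw [Nat.odd_iff]; omega) h2
  have hp4 : p % 4 = 3 := by omega
  ext (_ | i) (_ | j)
  · simp only [mul_apply, transpose_apply, of_apply, Fintype.sum_option, borderedQ,
      Finset.sum_const, Finset.card_univ, ZMod.card, nsmul_eq_mul, hp1, one_apply_eq]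
    linear_combination h_corner
  · simp only [mul_apply, transpose_apply, of_apply, Fintype.sum_option, borderedQ,
      ← Finset.mul_sum, sum_Qcirc_apply h2 hp4, one_apply_ne (Option.some_ne_none j).symm]
    exact h_border
  · simp only [mul_apply, transpose_apply, of_apply, Fintype.sum_option, borderedQ,
      ← Finset.sum_mul, sum_Qcirc_apply h2 hp4, one_apply_ne (Option.some_ne_none i)]
    linear_combination h_border
  · have hQ := Qcirc_mul_transpose_apply h2 hp a b c i j
    simp only [mul_apply, transpose_apply] at hQ
    simp only [mul_apply, transpose_apply, of_apply, Fintype.sum_option, borderedQ, hQ,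
      one_apply, Option.some_inj]
    split_ifs
    · linear_combination h_diag
    · linear_combination h_offdiag

theorem borderedQDC_eq_dualSet (h2 : (2 : R) = 0) (hp : p % 8 = 7)
    {a b c lam beta gam : R} (h_corner : lam ^ 2 + beta ^ 2 = 1)
    (h_border : lam * gam + beta * (a + b + c) = 0)
    (h_diag : gam ^ 2 + (a ^ 2 + b ^ 2 + c ^ 2) = 1)
    (h_offdiag : gam ^ 2 + (a * b + b * c + c * a + b ^ 2 + c ^ 2) = 0) :
    (borderedQDC p a b c lam beta gam : Set (Option (ZMod p) ⊕ Option (ZMod p) → R)) =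
      dualSet
        (borderedQDC p a b c lam beta gam : Set (Option (ZMod p) ⊕ Option (ZMod p) → R)) := by
  have hneg : (1 : Matrix (Option (ZMod p)) (Option (ZMod p)) R) = -1 := by
    rw [eq_neg_iff_add_eq_zero, ← two_smul R, h2, zero_smul]
  exact span_range_row_fromCols_one_eq_dualSet <| hneg ▸
    borderedQ_mul_transpose_eq_one h2 hp h_corner h_border h_diag h_offdiag

end BorderedCirculant

/-- For a prime `p ≡ 7 (mod 8)` and `ω` a root of `x² + x + 1` in `F₄ + u F₄`,
the bordered quadratic double circulant code
`B_p(1 + u + uω, ω + uω, 1 + ω, u, 1 + uω, 1 + uω)` over `F₄ + u F₄`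
is self-dual of length `2p + 2`. -/
theorem borderedQDC_self_dual_of_mod_eight_eq_seven
    (p : ℕ) [NeZero p] (hp : Nat.Prime p) (h7 : p % 8 = 7)
    (ω : R4) (hω : ω ^ 2 + ω + 1 = 0) :
    letI u : R4 := DualNumber.eps
    (borderedQDC p (1 + u + u * ω) (ω + u * ω) (1 + ω) u (1 + u * ω) (1 + u * ω) :
        Set ((Option (ZMod p) ⊕ Option (ZMod p)) → R4)) =
      dualSet (borderedQDC p (1 + u + u * ω) (ω + u * ω) (1 + ω) u (1 + u * ω) (1 + u * ω) :
        Set ((Option (ZMod p) ⊕ Option (ZMod p)) → R4)) := by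
  set u : R4 := DualNumber.eps
  have : Fact p.Prime := ⟨hp⟩
  have h2 : (2 : R4) = 0 := by
    have h := congrArg (algebraMap F4 R4) (CharTwo.two_eq_zero : (2 : F4) = 0)
    rwa [map_ofNat, map_zero] at h
  have hu : u ^ 2 = 0 := by rw [sq]; exact DualNumber.eps_mul_eps
  apply borderedQDC_eq_dualSet h2 h7
  · linear_combination u ^ 2 * hω - ω * hu + u * ω * h2
  · linear_combination (2 * u + 2 * u ^ 2) * hω - 2 * hu + (1 + ω + u * ω) * h2
  · linear_combination (2 + 2 * u + 3 * u ^ 2) * hω - (2 + ω) * hu + u * ω * h2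
  · linear_combination (3 + 5 * u + 3 * u ^ 2) * hω - (3 + 2 * ω) * hu +
      (ω - 2 * u + u * ω) * h2

end
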